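/- The maximum number of elements in a chain of T_n^B is exactly n² + 1 (i.e., λ₁(T_n^B) = n² + 1): there exists a chain of valid tuples with n² + 1 elements, and no chain has more. -/

import Mathlib

/-!
Along a strictly increasing chain of tuples `Fin n → Fin (n+1)` the entry sum strictly increases,
and it takes values in `0, …, n²`; hence no chain has more than `n² + 1` elements.
The bound is attained by the staircase chain: writing `m = q n + s` with `s < n`, its `m`-th
element has its last `q` entries equal to `∞`, the entry before them equal to `s`, and all
others `0`. Each of these tuples is valid, since the only finite nonzero entry `s` sits at
position `n - 1 - q` and points at position `2n - 1 - q - s ≥ n - q`, which carries `∞`.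
-/

/-- Validity predicate for elements of the type B Tamari lattice `T_n^B`,
encoded as tuples `r : Fin n → Fin (n+1)` where the value `n` represents `∞`. -/
def ValidB (n : ℕ) (r : Fin n → Fin (n+1)) : Prop :=
  (∀ i j : Fin n, i < j → (r j : ℕ) < n → (j : ℕ) - (i : ℕ) ≤ (r j : ℕ) →
      (r i : ℕ) ≤ (r j : ℕ) - ((j : ℕ) - (i : ℕ))) ∧
  (∀ i : Fin n, ∀ _h1 : (r i : ℕ) < n, ∀ h2 : (i : ℕ) + 1 ≤ (r i : ℕ),
      (r ⟨n + (i : ℕ) - (r i : ℕ), by have := i.isLt; omega⟩ : ℕ) = n)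

theorem IsChain.injOn_of_strictMono {α β : Type*} [PartialOrder α] [Preorder β] {f : α → β}
    (hf : StrictMono f) {s : Set α} (hs : IsChain (· ≤ ·) s) : s.InjOn f := by
  intro a ha b hb hab
  by_contra hne
  rcases hs ha hb hne with h | h
  · exact (hf (h.lt_of_ne hne)).ne hab
  · exact (hf (h.lt_of_ne (Ne.symm hne))).ne' hab

theorem strictMono_sum_val {ι : Type*} [Fintype ι] {k : ℕ} :
    StrictMono fun r : ι → Fin (k + 1) => ∑ i, (r i : ℕ) := by
  refine Fintype.sum_strictMono.comp fun r r' h => ?_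
  obtain ⟨hle, i, hlt⟩ := Pi.lt_def.1 h
  exact Pi.lt_def.2 ⟨fun j => hle j, i, hlt⟩

theorem Finset.card_le_of_isChain {ι : Type*} [Fintype ι] {k : ℕ}
    {C : Finset (ι → Fin (k + 1))} (hC : IsChain (· ≤ ·) (C : Set (ι → Fin (k + 1)))) :
    C.card ≤ Fintype.card ι * k + 1 := by
  have hsum_le (r : ι → Fin (k + 1)) : ∑ i, (r i : ℕ) ≤ Fintype.card ι * k := by
    simpa using Finset.sum_le_card_nsmul Finset.univ (fun i => (r i : ℕ)) k
      fun i _ => Nat.lt_succ_iff.mp (r i).isLt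
  calc C.card ≤ (Finset.range (Fintype.card ι * k + 1)).card :=
        Finset.card_le_card_of_injOn _
          (fun r _ => Finset.mem_range.mpr (Nat.lt_succ_of_le (hsum_le r)))
          (hC.injOn_of_strictMono strictMono_sum_val)
    _ = Fintype.card ι * k + 1 := Finset.card_range _

theorem Nat.div_lt_div_or_mod_lt_mod {m m' n : ℕ} (h : m < m') :
    m / n < m' / n ∨ (m / n = m' / n ∧ m % n < m' % n) := by
  rcases (Nat.div_le_div_right (c := n) h.le).lt_or_eq with hq | hq
  · exact Or.inl hq
  · refine Or.inr ⟨hq, ?_⟩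
    have := Nat.div_add_mod m n
    have := Nat.div_add_mod m' n
    rw [hq] at *
    omega

def staircase (n m : ℕ) (i : Fin n) : Fin (n + 1) :=
  if n - m / n ≤ (i : ℕ) then Fin.last n
  else if (i : ℕ) = n - 1 - m / n then ⟨m % n, by have := Nat.mod_lt m i.pos; omega⟩
  else 0

theorem staircase_val (n m : ℕ) (i : Fin n) :
    (staircase n m i : ℕ) =
      if n - m / n ≤ (i : ℕ) then n else if (i : ℕ) = n - 1 - m / n then m % n else 0 := by
  unfold staircase
  split_ifs <;> rfl

theorem validB_staircase (n m : ℕ) : ValidB n (staircase n m) := by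
  refine ⟨fun i j hij => ?_, fun i => ?_⟩
  · have hij : (i : ℕ) < j := hij
    have := Nat.mod_lt m i.pos
    simp only [staircase_val]
    split_ifs <;> omega
  · have := Nat.mod_lt m i.pos
    simp only [staircase_val]
    split_ifs <;> omega

theorem staircase_mono (n : ℕ) : Monotone (staircase n) := by
  intro m m' h i
  rcases h.eq_or_lt with rfl | h
  · rfl
  have := Nat.mod_lt m i.pos
  rcases Nat.div_lt_div_or_mod_lt_mod (n := n) h with hq | ⟨hq, hs⟩ <;>
  · simp only [Fin.le_def, staircase_val]
    split_ifs <;> omega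

theorem staircase_lt_staircase {n m m' : ℕ} (h : m < m') (hm' : m' ≤ n ^ 2) :
    staircase n m < staircase n m' := by
  have hn : 0 < n := Nat.pos_of_ne_zero (by rintro rfl; simp at hm'; omega)
  have hq : m / n < n := Nat.div_lt_of_lt_mul (by rw [← sq]; omega)
  have := Nat.mod_lt m hn
  refine Pi.lt_def.2 ⟨staircase_mono n h.le, Fin.rev ⟨m / n, hq⟩, ?_⟩
  rcases Nat.div_lt_div_or_mod_lt_mod (n := n) h with hq' | ⟨hq', hs⟩ <;>
  · simp only [Fin.lt_def, staircase_val, Fin.val_rev]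
    split_ifs <;> omega

theorem strictMonoOn_staircase (n : ℕ) : StrictMonoOn (staircase n) (Set.Iic (n ^ 2)) :=
  fun _ _ _ hm' h => staircase_lt_staircase h hm'

theorem lambda_one (n : ℕ) :
    (∃ C : Finset (Fin n → Fin (n+1)), (∀ r ∈ C, ValidB n r) ∧
        IsChain (· ≤ ·) (C : Set (Fin n → Fin (n+1))) ∧ C.card = n ^ 2 + 1) ∧
    (∀ C : Finset (Fin n → Fin (n+1)), (∀ r ∈ C, ValidB n r) →
        IsChain (· ≤ ·) (C : Set (Fin n → Fin (n+1))) → C.card ≤ n ^ 2 + 1) := by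
  refine ⟨⟨(Finset.range (n ^ 2 + 1)).image (staircase n), ?_, ?_, ?_⟩, fun C _ hC => ?_⟩
  · simp only [Finset.mem_image]
    rintro _ ⟨m, -, rfl⟩
    exact validB_staircase n m
  · rw [Finset.coe_image]
    exact (staircase_mono n).isChain_range.mono (Set.image_subset_range _ _)
  · rw [Finset.card_image_of_injOn, Finset.card_range]
    exact (strictMonoOn_staircase n).injOn.mono
      fun m hm => Nat.lt_succ_iff.mp (Finset.mem_range.mp hm)
  · simpa [sq] using Finset.card_le_of_isChain hC
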